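/- Let X, Θ, Y be separable real Hilbert spaces, U = X × Θ with norm ‖(x,θ)‖_U² = ‖x‖_X² + ‖θ‖_Θ², and F : U → Y Lipschitz with constant L. Let H be the class of all maps E : U → Y that are Lipschitz with constant at most R and satisfy ‖E(0)‖_Y ≤ B. Let ν, ν' be Borel probability measures on U with finite second moments. Then the infima of the risks over the hypothesis class satisfy |inf_{E∈H} R_{ν'}(E) − inf_{E∈H} R_ν(E)| ≤ c(ν,ν') · W₂(ν,ν'), where R_ν(E) = ∫ ‖F(u) − E(u)‖_Y² dν(u), W₂ is the 2-Wasserstein distance on U, and c(ν,ν') = C₁² √(2(∫‖u‖_U² dν + ∫‖u‖_U² dν')) + 2C₁C₂ with C₁ = L + R and C₂ = ‖F(0)‖_Y + B. -/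

import Mathlib

open MeasureTheory
open scoped ENNReal NNReal

noncomputable section

/-- The Hilbert norm on the product `U = X × Θ`: `‖(x, θ)‖_U = √(‖x‖² + ‖θ‖²)`. -/
def nU {X Θ : Type*} [NormedAddCommGroup X] [NormedAddCommGroup Θ] (u : X × Θ) : ℝ :=
  Real.sqrt (‖u.1‖ ^ 2 + ‖u.2‖ ^ 2)

/-- The 2-Wasserstein distance associated with a cost function `d`: the infimum over all
couplings `γ` of `μ` and `μ'` (i.e. probability measures on the product whose marginals are
`μ` and `μ'`) of `(∫ d(u,v)² dγ)^{1/2}`. -/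
def W2 {α : Type*} [MeasurableSpace α] (d : α → α → ℝ) (μ μ' : Measure α) : ℝ :=
  sInf { r : ℝ | ∃ γ : Measure (α × α), IsProbabilityMeasure γ ∧
      γ.map Prod.fst = μ ∧ γ.map Prod.snd = μ' ∧
      r = Real.sqrt (∫ p, d p.1 p.2 ^ 2 ∂γ) }

/-- The squared-error risk `R_ν(E) = ∫ ‖F(u) - E(u)‖² dν(u)`. -/
def risk {X Θ Y : Type*} [NormedAddCommGroup X] [NormedAddCommGroup Θ] [NormedAddCommGroup Y]
    [MeasurableSpace X] [MeasurableSpace Θ] (F E : X × Θ → Y) (ν : Measure (X × Θ)) : ℝ :=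
  ∫ u, ‖F u - E u‖ ^ 2 ∂ν

/-- The hypothesis class `H`: all maps `E : U → Y` that are Lipschitz with constant at most
`R₀` (with respect to the Hilbert product norm on `U`) and satisfy `‖E 0‖ ≤ B`. -/
def Hclass {X Θ Y : Type*} [NormedAddCommGroup X] [NormedAddCommGroup Θ] [NormedAddCommGroup Y]
    (R₀ B : ℝ) : Set (X × Θ → Y) :=
  { E | (∀ u v, ‖E u - E v‖ ≤ R₀ * nU (u - v)) ∧ ‖E 0‖ ≤ B }

/-- The constant `c(ν,ν') = C₁² √(2(∫‖u‖_U² dν + ∫‖u‖_U² dν')) + 2 C₁ C₂`, where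
`C₁ = L + R₀` and `C₂ = ‖F 0‖ + B`. -/
def cShift {X Θ Y : Type*} [NormedAddCommGroup X] [NormedAddCommGroup Θ] [NormedAddCommGroup Y]
    [MeasurableSpace X] [MeasurableSpace Θ] (L R₀ B : ℝ) (F : X × Θ → Y)
    (ν ν' : Measure (X × Θ)) : ℝ :=
  (L + R₀) ^ 2 * Real.sqrt (2 * ((∫ u, nU u ^ 2 ∂ν) + ∫ u, nU u ^ 2 ∂ν'))
    + 2 * (L + R₀) * (‖F 0‖ + B)

/-- The bound objective `J(ν) = inf_{E ∈ H} R_ν(E) + c(ν, ν_dep) W₂(ν, ν_dep)`, where the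
Wasserstein distance on `U = X × Θ` is taken with respect to the Hilbert product norm. -/
def Jobj {X Θ Y : Type*} [NormedAddCommGroup X] [NormedAddCommGroup Θ] [NormedAddCommGroup Y]
    [MeasurableSpace X] [MeasurableSpace Θ] (L R₀ B : ℝ) (F : X × Θ → Y)
    (νdep ν : Measure (X × Θ)) : ℝ :=
  sInf ((fun E => risk F E ν) '' Hclass R₀ B)
    + cShift L R₀ B F ν νdep * W2 (fun u v => nU (u - v)) ν νdep

variable {X Θ Y : Type*}
  [NormedAddCommGroup X] [InnerProductSpace ℝ X] [CompleteSpace X]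
  [SecondCountableTopology X] [MeasurableSpace X] [BorelSpace X]
  [NormedAddCommGroup Θ] [InnerProductSpace ℝ Θ] [CompleteSpace Θ]
  [SecondCountableTopology Θ] [MeasurableSpace Θ] [BorelSpace Θ]
  [NormedAddCommGroup Y] [InnerProductSpace ℝ Y] [CompleteSpace Y]
  [SecondCountableTopology Y]

open Set

/-!
For `E ∈ H` the error `e = F - E` is `C₁`-Lipschitz with `‖e 0‖ ≤ C₂`, hence
`‖e u‖ ≤ C₁ ‖u‖ + C₂` and
`|‖e v‖² - ‖e u‖²| ≤ ‖e v - e u‖ (‖e u‖ + ‖e v‖) ≤ C₁² (‖u‖ + ‖v‖) ‖u - v‖ + 2 C₁ C₂ ‖u - v‖`.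
Integrating this against a coupling `γ` of `ν` and `ν'` and applying Cauchy–Schwarz, with
`∫ (‖u‖ + ‖v‖)² dγ ≤ 2 (∫ ‖u‖² dν + ∫ ‖v‖² dν')`, bounds `|R_ν'(E) - R_ν(E)|` by
`c(ν, ν') (∫ ‖u - v‖² dγ)^{1/2}` uniformly in `E`. An infimum over `H` moves by at most the
uniform distance of the two risk functionals, and the infimum over couplings gives `W₂`.
-/

section InfimumBounds

lemma sInf_image_le_sInf_image_add {ι : Type*} {S : Set ι} {f g : ι → ℝ} {c : ℝ}
    (hS : S.Nonempty) (hf : BddBelow (f '' S)) (h : ∀ x ∈ S, f x ≤ g x + c) :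
    sInf (f '' S) ≤ sInf (g '' S) + c := by
  rw [← sub_le_iff_le_add]
  refine le_csInf (hS.image g) ?_
  rintro _ ⟨x, hx, rfl⟩
  linarith [csInf_le hf (mem_image_of_mem f hx), h x hx]

lemma abs_sInf_image_sub_sInf_image_le {ι : Type*} {S : Set ι} {f g : ι → ℝ} {c : ℝ}
    (hS : S.Nonempty) (hf : BddBelow (f '' S)) (hg : BddBelow (g '' S))
    (h : ∀ x ∈ S, |f x - g x| ≤ c) : |sInf (f '' S) - sInf (g '' S)| ≤ c := by
  have hfg := sInf_image_le_sInf_image_add (g := g) hS hf fun x hx => by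
    linarith [(abs_le.1 (h x hx)).2]
  have hgf := sInf_image_le_sInf_image_add (g := f) hS hg fun x hx => by
    linarith [(abs_le.1 (h x hx)).1]
  exact abs_sub_le_iff.2 ⟨by linarith, by linarith⟩

lemma le_mul_sInf {a c : ℝ} {S : Set ℝ} (hc : 0 ≤ c) (hS : S.Nonempty)
    (h : ∀ r ∈ S, a ≤ c * r) : a ≤ c * sInf S := by
  rw [← smul_eq_mul, ← Real.sInf_smul_of_nonneg hc]
  exact le_csInf hS.smul_set (by rintro _ ⟨r, hr, rfl⟩; exact h r hr)

end InfimumBounds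

section HilbertProductNorm

variable {V W : Type*} [NormedAddCommGroup V] [NormedAddCommGroup W]

lemma nU_eq_norm_toLp (u : V × W) : nU u = ‖WithLp.toLp 2 u‖ := by
  rw [WithLp.prod_norm_eq_of_L2]; rfl

lemma nU_nonneg (u : V × W) : 0 ≤ nU u := Real.sqrt_nonneg _

lemma nU_sub_comm (u v : V × W) : nU (u - v) = nU (v - u) := by
  simp only [nU_eq_norm_toLp, WithLp.toLp_sub, norm_sub_rev]

lemma nU_sub_le (u v : V × W) : nU (u - v) ≤ nU u + nU v := by
  simpa only [nU_eq_norm_toLp, WithLp.toLp_sub] using norm_sub_le _ _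

lemma continuous_nU : Continuous (nU : V × W → ℝ) := by
  simpa only [funext nU_eq_norm_toLp] using (WithLp.prod_continuous_toLp 2 V W).norm

variable {Z : Type*} [NormedAddCommGroup Z]

lemma continuous_of_norm_sub_le_mul_nU {f : V × W → Z} {K : ℝ}
    (hf : ∀ u v, ‖f u - f v‖ ≤ K * nU (u - v)) : Continuous f := by
  have hlip : LipschitzWith K.toNNReal (f ∘ WithLp.ofLp (p := 2)) :=
    LipschitzWith.of_dist_le' fun a b => by
      simpa [dist_eq_norm, nU_eq_norm_toLp] using hf a.ofLp b.ofLp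
  exact hlip.continuous.comp (WithLp.prod_continuous_toLp 2 V W)

lemma norm_le_mul_nU_add_norm_zero {f : V × W → Z} {K : ℝ}
    (hf : ∀ u v, ‖f u - f v‖ ≤ K * nU (u - v)) (u : V × W) : ‖f u‖ ≤ K * nU u + ‖f 0‖ := by
  have := hf u 0
  rw [sub_zero] at this
  linarith [norm_le_insert' (f u) (f 0)]

lemma abs_sq_norm_sub_sq_norm_le (a b : Z) :
    |‖a‖ ^ 2 - ‖b‖ ^ 2| ≤ ‖a - b‖ * (‖a‖ + ‖b‖) := by
  rw [sq_sub_sq, abs_mul, abs_of_nonneg (by positivity : 0 ≤ ‖a‖ + ‖b‖), mul_comm]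
  exact mul_le_mul_of_nonneg_right (abs_norm_sub_norm_le a b) (by positivity)

lemma abs_sq_norm_sub_sq_norm_le_of_norm_sub_le {f : V × W → Z} {K M : ℝ} (hK : 0 ≤ K)
    (hf : ∀ u v, ‖f u - f v‖ ≤ K * nU (u - v)) (hf0 : ‖f 0‖ ≤ M) (u v : V × W) :
    |‖f v‖ ^ 2 - ‖f u‖ ^ 2|
      ≤ K ^ 2 * ((nU u + nU v) * nU (u - v)) + 2 * K * M * nU (u - v) := by
  have hv : ‖f v‖ ≤ K * nU v + M := (norm_le_mul_nU_add_norm_zero hf v).trans (by linarith)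
  have hu : ‖f u‖ ≤ K * nU u + M := (norm_le_mul_nU_add_norm_zero hf u).trans (by linarith)
  calc |‖f v‖ ^ 2 - ‖f u‖ ^ 2| ≤ ‖f v - f u‖ * (‖f v‖ + ‖f u‖) := abs_sq_norm_sub_sq_norm_le _ _
    _ ≤ K * nU (u - v) * ((K * nU v + M) + (K * nU u + M)) := by
        rw [nU_sub_comm]
        gcongr
        · exact mul_nonneg hK (nU_nonneg _)
        · exact hf v u
    _ = _ := by rw [nU_sub_comm]; ring

lemma norm_sub_sub_le_of_mem_Hclass {F E : V × W → Z} {L R B : ℝ}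
    (hF : ∀ u v, ‖F u - F v‖ ≤ L * nU (u - v)) (hE : E ∈ (Hclass R B : Set (V × W → Z)))
    (u v : V × W) : ‖(F u - E u) - (F v - E v)‖ ≤ (L + R) * nU (u - v) :=
  calc ‖(F u - E u) - (F v - E v)‖ = ‖(F u - F v) - (E u - E v)‖ := by congr 1; abel
    _ ≤ ‖F u - F v‖ + ‖E u - E v‖ := norm_sub_le _ _
    _ ≤ (L + R) * nU (u - v) := by linarith [hF u v, hE.1 u v]

lemma zero_mem_Hclass {R B : ℝ} (hR : 0 ≤ R) (hB : 0 ≤ B) :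
    (0 : V × W → Z) ∈ (Hclass R B : Set (V × W → Z)) :=
  ⟨fun u v => by simpa using mul_nonneg hR (nU_nonneg (u - v)), by simpa using hB⟩

end HilbertProductNorm

section Integration

variable {Ω : Type*} [MeasurableSpace Ω] {μ : Measure Ω}

lemma integral_mul_le_sqrt_mul_sqrt {f g : Ω → ℝ} (hf0 : 0 ≤ f) (hg0 : 0 ≤ g)
    (hf : MemLp f 2 μ) (hg : MemLp g 2 μ) :
    ∫ ω, f ω * g ω ∂μ ≤ √(∫ ω, f ω ^ 2 ∂μ) * √(∫ ω, g ω ^ 2 ∂μ) := by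
  have := integral_mul_le_Lp_mul_Lq_of_nonneg Real.HolderConjugate.two_two (ae_of_all _ hf0)
    (ae_of_all _ hg0) (by simpa using hf) (by simpa using hg)
  simpa [Real.sqrt_eq_rpow] using this

lemma integral_le_sqrt_integral_sq [IsProbabilityMeasure μ] {f : Ω → ℝ} (hf0 : 0 ≤ f)
    (hf : MemLp f 2 μ) : ∫ ω, f ω ∂μ ≤ √(∫ ω, f ω ^ 2 ∂μ) := by
  simpa using integral_mul_le_sqrt_mul_sqrt hf0 (fun _ => zero_le_one) hf (memLp_const 1)

lemma integral_add_sq_le {f g : Ω → ℝ} (hf : MemLp f 2 μ) (hg : MemLp g 2 μ) :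
    ∫ ω, (f ω + g ω) ^ 2 ∂μ ≤ 2 * (∫ ω, f ω ^ 2 ∂μ + ∫ ω, g ω ^ 2 ∂μ) := by
  rw [← integral_add hf.integrable_sq hg.integrable_sq, ← integral_const_mul]
  exact integral_mono (hf.add hg).integrable_sq
    ((hf.integrable_sq.add hg.integrable_sq).const_mul 2) fun ω => add_sq_le

lemma abs_integral_sub_integral_le [IsProbabilityMeasure μ] {f g s d : Ω → ℝ} {A C : ℝ}
    (hA : 0 ≤ A) (hC : 0 ≤ C) (hf : Integrable f μ) (hg : Integrable g μ)
    (hs0 : 0 ≤ s) (hd0 : 0 ≤ d) (hs : MemLp s 2 μ) (hd : MemLp d 2 μ)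
    (hfg : ∀ ω, |f ω - g ω| ≤ A * (s ω * d ω) + C * d ω) :
    |∫ ω, f ω ∂μ - ∫ ω, g ω ∂μ| ≤ (A * √(∫ ω, s ω ^ 2 ∂μ) + C) * √(∫ ω, d ω ^ 2 ∂μ) := by
  have hsd : Integrable (fun ω => s ω * d ω) μ := hs.integrable_mul hd
  have hd1 : Integrable d μ := hd.integrable one_le_two
  calc |∫ ω, f ω ∂μ - ∫ ω, g ω ∂μ| = |∫ ω, (f ω - g ω) ∂μ| := by rw [integral_sub hf hg]
    _ ≤ ∫ ω, |f ω - g ω| ∂μ := abs_integral_le_integral_abs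
    _ ≤ ∫ ω, (A * (s ω * d ω) + C * d ω) ∂μ :=
        integral_mono (hf.sub hg).abs ((hsd.const_mul A).add (hd1.const_mul C)) hfg
    _ = A * ∫ ω, s ω * d ω ∂μ + C * ∫ ω, d ω ∂μ := by
        rw [integral_add (hsd.const_mul A) (hd1.const_mul C), integral_const_mul,
          integral_const_mul]
    _ ≤ A * (√(∫ ω, s ω ^ 2 ∂μ) * √(∫ ω, d ω ^ 2 ∂μ)) + C * √(∫ ω, d ω ^ 2 ∂μ) := by
        gcongr
        exacts [integral_mul_le_sqrt_mul_sqrt hs0 hd0 hs hd, integral_le_sqrt_integral_sq hd0 hd]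
    _ = _ := by ring

end Integration

section Coupling

variable {V W Z : Type*} [NormedAddCommGroup V] [NormedAddCommGroup W] [NormedAddCommGroup Z]
  [MeasurableSpace V] [MeasurableSpace W]

lemma cShift_nonneg {L R B : ℝ} (hL : 0 ≤ L) (hR : 0 ≤ R) (hB : 0 ≤ B) (F : V × W → Z)
    (ν ν' : Measure (V × W)) : 0 ≤ cShift L R B F ν ν' :=
  add_nonneg (by positivity)
    (mul_nonneg (mul_nonneg zero_le_two (add_nonneg hL hR)) (add_nonneg (norm_nonneg _) hB))

lemma bddBelow_risk_image (F : V × W → Z) (ν : Measure (V × W)) (S : Set (V × W → Z)) :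
    BddBelow ((fun E => risk F E ν) '' S) :=
  ⟨0, by rintro _ ⟨E, -, rfl⟩; exact integral_nonneg fun _ => sq_nonneg _⟩

variable [OpensMeasurableSpace (V × W)]

lemma memLp_two_nU {ν : Measure (V × W)} (hν : Integrable (fun u => nU u ^ 2) ν) :
    MemLp nU 2 ν :=
  (memLp_two_iff_integrable_sq continuous_nU.aestronglyMeasurable).2 hν

lemma memLp_two_norm_of_norm_sub_le_mul_nU {ν : Measure (V × W)} [IsFiniteMeasure ν]
    {f : V × W → Z} {K : ℝ} (hf : ∀ u v, ‖f u - f v‖ ≤ K * nU (u - v)) (hν : MemLp nU 2 ν) :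
    MemLp (fun u => ‖f u‖) 2 ν :=
  ((hν.const_mul K).add (memLp_const ‖f 0‖)).of_le
    (continuous_of_norm_sub_le_mul_nU hf).norm.aestronglyMeasurable
    (ae_of_all _ fun u => by
      rw [norm_norm, Pi.add_apply, Real.norm_eq_abs]
      exact (norm_le_mul_nU_add_norm_zero hf u).trans (le_abs_self _))

lemma memLp_two_nU_fst_sub_snd [SecondCountableTopology (V × W)]
    {γ : Measure ((V × W) × (V × W))} (hm₁ : MemLp (fun p => nU p.1) 2 γ)
    (hm₂ : MemLp (fun p => nU p.2) 2 γ) : MemLp (fun p => nU (p.1 - p.2)) 2 γ :=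
  (hm₁.add hm₂).of_le
    (continuous_nU.comp (continuous_fst.sub continuous_snd)).aestronglyMeasurable
    (ae_of_all _ fun p => by
      simpa only [Pi.add_apply, Real.norm_of_nonneg (nU_nonneg _),
        Real.norm_of_nonneg (add_nonneg (nU_nonneg p.1) (nU_nonneg p.2))] using nU_sub_le p.1 p.2)

theorem abs_risk_sub_risk_le_of_coupling {F E : V × W → Z} {L R B : ℝ} (hL : 0 ≤ L)
    (hR : 0 ≤ R) (hF : ∀ u v, ‖F u - F v‖ ≤ L * nU (u - v))
    (hE : E ∈ (Hclass R B : Set (V × W → Z))) [SecondCountableTopology (V × W)]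
    {ν ν' : Measure (V × W)} {γ : Measure ((V × W) × (V × W))} [IsProbabilityMeasure γ]
    (h₁ : γ.map Prod.fst = ν) (h₂ : γ.map Prod.snd = ν')
    (hν : Integrable (fun u => nU u ^ 2) ν) (hν' : Integrable (fun u => nU u ^ 2) ν') :
    |risk F E ν' - risk F E ν| ≤ cShift L R B F ν ν' * √(∫ p, nU (p.1 - p.2) ^ 2 ∂γ) := by
  subst h₁ h₂
  set e : V × W → Z := fun u => F u - E u
  have he : ∀ u v, ‖e u - e v‖ ≤ (L + R) * nU (u - v) := norm_sub_sub_le_of_mem_Hclass hF hE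
  have he0 : ‖e 0‖ ≤ ‖F 0‖ + B := by linarith [norm_sub_le (F 0) (E 0), hE.2]
  have hec : Continuous e := continuous_of_norm_sub_le_mul_nU he
  have hm₁ : MemLp (fun p => nU p.1) 2 γ :=
    (memLp_two_nU hν).comp_of_map measurable_fst.aemeasurable
  have hm₂ : MemLp (fun p => nU p.2) 2 γ :=
    (memLp_two_nU hν').comp_of_map measurable_snd.aemeasurable
  have he₁ : MemLp (fun p => ‖e p.1‖) 2 γ :=
    (memLp_two_norm_of_norm_sub_le_mul_nU he (memLp_two_nU hν)).comp_of_map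
      measurable_fst.aemeasurable
  have he₂ : MemLp (fun p => ‖e p.2‖) 2 γ :=
    (memLp_two_norm_of_norm_sub_le_mul_nU he (memLp_two_nU hν')).comp_of_map
      measurable_snd.aemeasurable
  have hC : 0 ≤ 2 * (L + R) * (‖F 0‖ + B) :=
    mul_nonneg (mul_nonneg zero_le_two (add_nonneg hL hR)) ((norm_nonneg _).trans he0)
  have hrisk : ∀ π : (V × W) × (V × W) → V × W, Measurable π →
      risk F E (γ.map π) = ∫ p, ‖e (π p)‖ ^ 2 ∂γ := fun π hπ =>
    integral_map hπ.aemeasurable (hec.norm.pow 2).aestronglyMeasurable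
  have hmoment : ∀ π : (V × W) × (V × W) → V × W, Measurable π →
      ∫ u, nU u ^ 2 ∂(γ.map π) = ∫ p, nU (π p) ^ 2 ∂γ := fun π hπ =>
    integral_map hπ.aemeasurable (continuous_nU.pow 2).aestronglyMeasurable
  rw [hrisk _ measurable_fst, hrisk _ measurable_snd]
  refine (abs_integral_sub_integral_le (sq_nonneg (L + R)) hC
    he₂.integrable_sq he₁.integrable_sq
    (fun p => add_nonneg (nU_nonneg p.1) (nU_nonneg p.2)) (fun p => nU_nonneg _)
    (hm₁.add hm₂) (memLp_two_nU_fst_sub_snd hm₁ hm₂)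
    (fun p => abs_sq_norm_sub_sq_norm_le_of_norm_sub_le (add_nonneg hL hR) he he0 p.1 p.2)).trans ?_
  rw [cShift, hmoment _ measurable_fst, hmoment _ measurable_snd]
  gcongr
  exact integral_add_sq_le hm₁ hm₂

end Coupling

/-- **stability of the optimal risk over the hypothesis class.**
`|inf_{E∈H} R_{ν'}(E) − inf_{E∈H} R_ν(E)| ≤ c(ν,ν') · W₂(ν,ν')`. -/
theorem inf_risk_shift (F : X × Θ → Y) (L R B : ℝ)
    (hL : 0 ≤ L) (hR : 0 ≤ R) (hB : 0 ≤ B)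
    (hF : ∀ u v : X × Θ, ‖F u - F v‖ ≤ L * nU (u - v))
    (ν ν' : Measure (X × Θ)) [IsProbabilityMeasure ν] [IsProbabilityMeasure ν']
    (hν : Integrable (fun u => nU u ^ 2) ν) (hν' : Integrable (fun u => nU u ^ 2) ν') :
    |sInf ((fun E => risk F E ν') '' (Hclass R B : Set (X × Θ → Y)))
        - sInf ((fun E => risk F E ν) '' (Hclass R B : Set (X × Θ → Y)))|
      ≤ cShift L R B F ν ν' * W2 (fun u v => nU (u - v)) ν ν' := by
  have hcoupling : (ν.prod ν').map Prod.fst = ν ∧ (ν.prod ν').map Prod.snd = ν' := by simp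
  refine le_mul_sInf (cShift_nonneg hL hR hB F ν ν')
    ⟨_, ν.prod ν', inferInstance, hcoupling.1, hcoupling.2, rfl⟩ ?_
  rintro _ ⟨γ, hγ, h₁, h₂, rfl⟩
  exact abs_sInf_image_sub_sInf_image_le ⟨0, zero_mem_Hclass hR hB⟩
    (bddBelow_risk_image F ν' _) (bddBelow_risk_image F ν _)
    fun E hE => abs_risk_sub_risk_le_of_coupling hL hR hF hE h₁ h₂ hν hν'
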